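/- Let 𝒢 be a class of left R-modules that is closed under kernels of epimorphisms and under countable direct sums. Then 𝒢 is closed under direct summands: if M ⊕ N ∈ 𝒢 then M ∈ 𝒢. -/

import Mathlib

open CategoryTheory CategoryTheory.Limits

set_option autoImplicit false

universe u

variable {R : Type u} [Ring R]

/-- A short exact sequence of `R`-modules encoded by two linear maps. -/
def IsSES {A B C : ModuleCat.{u} R} (f : A →ₗ[R] B) (g : B →ₗ[R] C) : Prop :=
  Function.Injective f ∧ Function.Exact f g ∧ Function.Surjective g

open DirectSum

/-! Eilenberg's swindle: in `S = ⨁ₙ (M × N)` one has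
`M × S ≅ M × (M × N) × (M × N) × ⋯ ≅ (M × N) × (M × N) × ⋯ = S`,
so `0 → M → S → S → 0` is exact and `M` is the kernel of an epimorphism between members
of the class. -/

theorem isSES_of_linearEquiv_prod {A B C : ModuleCat.{u} R} (e : B ≃ₗ[R] A × C) :
    IsSES (e.symm.toLinearMap ∘ₗ LinearMap.inl R A C) (LinearMap.snd R A C ∘ₗ e.toLinearMap) :=
  ⟨e.symm.injective.comp (LinearMap.inl_injective (R := R)),
    (LinearEquiv.conj_symm_exact_iff_exact _ _ e).mpr (Function.Exact.inl_snd (R := R)),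
    (LinearMap.snd_surjective (R := R)).comp e.surjective⟩

namespace DirectSum

variable (R)

noncomputable def prodDistribLEquiv {ι : Type*} (A B : ι → Type*)
    [∀ i, AddCommGroup (A i)] [∀ i, Module R (A i)]
    [∀ i, AddCommGroup (B i)] [∀ i, Module R (B i)] :
    (⨁ i, A i × B i) ≃ₗ[R] (⨁ i, A i) × ⨁ i, B i :=
  LinearEquiv.ofLinearMap
    ((lmap fun i => LinearMap.fst R (A i) (B i)).prod (lmap fun i => LinearMap.snd R (A i) (B i)))
    ((lmap fun i => LinearMap.inl R (A i) (B i)).coprod (lmap fun i => LinearMap.inr R (A i) (B i)))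
    (by ext <;> simp) (by ext <;> simp)

noncomputable def natLEquivProdDirectSum (A : Type*) [AddCommGroup A] [Module R A] :
    (⨁ _ : ℕ, A) ≃ₗ[R] A × ⨁ _ : ℕ, A :=
  (lequivCongrLeft R (Denumerable.eqv (Option ℕ)).symm).trans (lequivProdDirectSum R)

noncomputable def eilenbergSwindle (A B : Type*) [AddCommGroup A] [Module R A]
    [AddCommGroup B] [Module R B] :
    (⨁ _ : ℕ, A × B) ≃ₗ[R] A × ⨁ _ : ℕ, A × B :=
  prodDistribLEquiv R _ _ ≪≫ₗ
    (natLEquivProdDirectSum R A).prodCongr (LinearEquiv.refl R _) ≪≫ₗ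
    LinearEquiv.prodAssoc R _ _ _ ≪≫ₗ
    (LinearEquiv.refl R A).prodCongr (prodDistribLEquiv R _ _).symm

end DirectSum

theorem statement3 (𝒢 : ModuleCat.{u} R → Prop)
    (hker : ∀ (A B C : ModuleCat.{u} R) (f : A →ₗ[R] B) (g : B →ₗ[R] C),
      IsSES f g → 𝒢 B → 𝒢 C → 𝒢 A)
    (hsum : ∀ (P : ℕ → ModuleCat.{u} R), (∀ i, 𝒢 (P i)) → 𝒢 (ModuleCat.of R (⨁ i, P i)))
    (M N : ModuleCat.{u} R) (h : 𝒢 (ModuleCat.of R (M × N))) : 𝒢 M := by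
  let S := ModuleCat.of R (⨁ _ : ℕ, M × N)
  have hS : 𝒢 S := hsum _ fun _ => h
  exact hker M S S _ _ (isSES_of_linearEquiv_prod (eilenbergSwindle R M N)) hS hS
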